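/- arXiv:2505.12877 — 8 statements merged into one kernel-verified Lean document; each statement's English description precedes it below -/
import Mathlib

section
/- Let H1 be a finite group acting on a finite set T, and let H2 be a normal subgroup of H1 with H1/H2 cyclic. Let σH2 be a generator of H1/H2. Then the number of H1-orbits on T which are also H2-orbits equals (1/|H2|) · Σ_{h ∈ σH2} |T^h|, where T^h is the set of fixed points of h on T. -/
open MulAction

-- Key lemma A
theorem keyA {H1 T : Type} [Group H1] [Finite H1] [MulAction H1 T]
    (H2 : Subgroup H1) [H2.Normal] (σ : H1)
    (hgen : ∀ x : H1 ⧸ H2, x ∈ Subgroup.zpowers ((σ : H1 ⧸ H2))) (t : T) :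
    (∃ h : H2, (σ * (h : H1)) • t = t) ↔
      MulAction.orbit H2 t = MulAction.orbit H1 t := by
  constructor
  · rintro ⟨⟨h0, hh0⟩, hfix⟩
    apply Set.Subset.antisymm
    · rintro x ⟨⟨g, hg⟩, rfl⟩
      exact mem_orbit t g
    · rintro x ⟨g, rfl⟩
      have claim : ∀ k : ℕ, ∀ h : H1, h ∈ H2 → (σ ^ k * h) • t ∈ orbit H2 t := by
        intro k
        induction k with
        | zero => intro h hh; rw [pow_zero, one_mul]; exact ⟨⟨h, hh⟩, rfl⟩
        | succ k ih =>
          intro h hh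
          set h'' := σ * (h * h0⁻¹) * σ⁻¹ with hh''def
          have hh'' : h'' ∈ H2 :=
            Subgroup.Normal.conj_mem ‹H2.Normal› _ (H2.mul_mem hh (H2.inv_mem hh0)) σ
          have key : (σ ^ (k + 1) * h) • t = (σ ^ k * h'') • t := by
            have : σ ^ (k+1) * h = (σ ^ k * h'') * (σ * h0) := by
              rw [hh''def]; group
            rw [this, mul_smul, hfix]
          rw [key]
          exact ih h'' hh''
      obtain ⟨k, hk⟩ := mem_powers_iff_mem_zpowers.mpr (hgen (g : H1 ⧸ H2))
      have hmem : (σ ^ k)⁻¹ * g ∈ H2 := by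
        rw [← QuotientGroup.eq]
        simpa using hk
      have : g • t = (σ ^ k * ((σ ^ k)⁻¹ * g)) • t := by group
      show g • t ∈ orbit (H2 : Subgroup H1) t
      rw [this]
      exact claim k _ hmem
  · intro hP
    have : σ • t ∈ MulAction.orbit (H2 : Subgroup H1) t := by
      rw [hP]; exact mem_orbit t σ
    obtain ⟨⟨h2, hh2⟩, hh2t⟩ := this
    refine ⟨⟨σ⁻¹ * h2⁻¹ * σ, ?_⟩, ?_⟩
    · simpa using Subgroup.Normal.conj_mem ‹H2.Normal› _ (H2.inv_mem hh2) σ⁻¹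
    · have : σ * (σ⁻¹ * h2⁻¹ * σ) = h2⁻¹ * σ := by group
      rw [this, mul_smul]
      simp only [Subgroup.smul_def] at hh2t
      rw [← hh2t, inv_smul_smul]

def goodSet {H1 T : Type} [Group H1] [MulAction H1 T] (H2 : Subgroup H1) :
    SubMulAction H2 T where
  carrier := {t | MulAction.orbit H2 t = MulAction.orbit H1 t}
  smul_mem' := by
    rintro ⟨h, hh⟩ t ht
    show orbit (H2 : Subgroup H1) (h • t) = orbit H1 (h • t)
    rw [show ((⟨h, hh⟩ : H2) : H1) • t = (⟨h, hh⟩ : H2) • t from rfl] at *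
    rw [orbit_smul]
    have : orbit H1 ((⟨h, hh⟩ : H2) • t) = orbit H1 (h • t) := rfl
    rw [this, orbit_smul]
    exact ht

noncomputable def goodEquiv {H1 T : Type} [Group H1] [MulAction H1 T] (H2 : Subgroup H1) :
    orbitRel.Quotient H2 (goodSet (T := T) H2) ≃ {s : Set T // (∃ t, s = MulAction.orbit H1 t) ∧
        (∃ t, s = MulAction.orbit H2 t)} := by
  have hres : ∀ a b : goodSet (T := T) H2, MulAction.orbitRel H2 (goodSet (T := T) H2) a b →
      (⟨MulAction.orbit H2 (a : T), ⟨(a : T), a.2⟩, ⟨(a : T), rfl⟩⟩ :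
        {s : Set T // (∃ t, s = MulAction.orbit H1 t) ∧ (∃ t, s = MulAction.orbit H2 t)}) =
      ⟨MulAction.orbit H2 (b : T), ⟨(b : T), b.2⟩, ⟨(b : T), rfl⟩⟩ := by
    rintro a b hab
    obtain ⟨h, rfl⟩ := hab
    simp only [Subtype.mk.injEq]
    have : ((h • b : goodSet (T := T) H2) : T) = h • (b : T) := rfl
    rw [this, orbit_smul]
  apply Equiv.ofBijective (Quotient.lift _ hres)
  constructor
  · rintro ⟨a⟩ ⟨b⟩ hab
    apply Quotient.sound
    show a ∈ orbit H2 b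
    have hab2 : orbit (H2 : Subgroup H1) (a : T) = orbit H2 (b : T) := Subtype.ext_iff.mp hab
    have : (a : T) ∈ orbit (H2 : Subgroup H1) (b : T) := by
      rw [← hab2]; exact mem_orbit_self _
    obtain ⟨h, hh⟩ := this
    exact ⟨h, Subtype.ext hh⟩
  · rintro ⟨s, ⟨t1, rfl⟩, ⟨t2, ht2⟩⟩
    have ht2S : (t2 : T) ∈ goodSet (T := T) H2 := by
      show orbit (H2 : Subgroup H1) t2 = orbit H1 t2
      rw [← ht2]
      have : t2 ∈ orbit H1 t1 := by
        rw [ht2]; exact mem_orbit_self _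
      exact (orbit_eq_iff.mpr this).symm
    exact ⟨Quotient.mk _ (⟨t2, ht2S⟩ : goodSet (T := T) H2), Subtype.ext ht2.symm⟩

private lemma swap_count {X Y : Type} [Fintype X] [Fintype Y] (p : X → Y → Prop) :
    ∑ x : X, Nat.card {y : Y // p x y} = ∑ y : Y, Nat.card {x : X // p x y} := by
  classical
  simp_rw [Nat.card_eq_fintype_card, Fintype.card_subtype, Finset.card_filter]
  exact Finset.sum_comm

/-- Lemma 4.2 / Burnside-type count.
If `H1` is a finite group acting on a finite set `T`, `H2 ⊴ H1` with cyclic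
quotient generated by the coset `σH2`, then the number of `H1`-orbits on `T`
which are also `H2`-orbits, multiplied by `|H2|`, equals `∑_{h ∈ σH2} |T^h|`. -/
theorem stmt0 {H1 T : Type} [Group H1] [Fintype H1] [Finite T]
    [MulAction H1 T] (H2 : Subgroup H1) [H2.Normal] [DecidablePred (· ∈ H2)]
    (σ : H1)
    (hgen : ∀ x : H1 ⧸ H2, x ∈ Subgroup.zpowers ((σ : H1 ⧸ H2))) :
    Nat.card {s : Set T // (∃ t, s = MulAction.orbit H1 t) ∧
        (∃ t, s = MulAction.orbit H2 t)} * Nat.card H2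
      = ∑ h : H2, Nat.card (MulAction.fixedBy T (σ * (h : H1))) := by
  classical
  have : Fintype T := Fintype.ofFinite T
  letI : Fintype ↥(goodSet (T := T) H2) := Fintype.ofFinite _
  letI : ∀ h : H2, Fintype (fixedBy ↥(goodSet (T := T) H2) h) := fun h => Fintype.ofFinite _
  letI : Fintype (orbitRel.Quotient H2 (goodSet (T := T) H2)) := Fintype.ofFinite _
  have hL : Nat.card {s : Set T // (∃ t, s = MulAction.orbit H1 t) ∧
      (∃ t, s = MulAction.orbit H2 t)} =
      Nat.card (orbitRel.Quotient H2 (goodSet (T := T) H2)) :=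
    Nat.card_congr (goodEquiv H2).symm
  rw [hL]
  -- step 1: rewrite RHS as sum over subtypes
  have step1 : ∀ h : H2, Nat.card (MulAction.fixedBy T (σ * (h : H1))) =
      Nat.card {t : T // (σ * (h : H1)) • t = t} := fun h =>
    Nat.card_congr (Equiv.subtypeEquivRight fun t => Iff.rfl)
  -- pointwise: per t
  have point : ∀ t : T, Nat.card {h : H2 // (σ * (h : H1)) • t = t} =
      Nat.card {h : H2 // (h : H1) • t = t ∧ t ∈ goodSet (T := T) H2} := by
    intro t
    by_cases ht : t ∈ goodSet (T := T) H2
    · obtain ⟨h0, hfix⟩ := (keyA H2 σ hgen t).mpr ht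
      refine Nat.card_congr ?_
      refine ⟨fun h => ⟨h0⁻¹ * h.1, ?_, ht⟩, fun h => ⟨h0 * h.1, ?_⟩, ?_, ?_⟩
      · obtain ⟨⟨h, hh⟩, hfh⟩ := h
        have e1 : (h : H1) • t = σ⁻¹ • t := by
          rw [eq_inv_smul_iff, ← mul_smul]; exact hfh
        have e0 : (h0 : H1) • t = σ⁻¹ • t := by
          rw [eq_inv_smul_iff, ← mul_smul]; exact hfix
        show ((h0⁻¹ * ⟨h, hh⟩ : H2) : H1) • t = t
        push_cast
        rw [mul_smul, e1, ← e0]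
        exact inv_smul_smul _ _
      · obtain ⟨⟨h, hh⟩, hfh, -⟩ := h
        show (σ * ((h0 : H1) * h)) • t = t
        rw [← mul_assoc, mul_smul]
        simp only at hfh
        rw [hfh]
        exact hfix
      · rintro ⟨h, hfh⟩
        simp [mul_assoc]
      · rintro ⟨h, hfh, -⟩
        simp [mul_assoc]
    · have e1 : IsEmpty {h : H2 // (σ * (h : H1)) • t = t} :=
        ⟨fun h => ht ((keyA H2 σ hgen t).mp ⟨h.1, h.2⟩)⟩
      have e2 : IsEmpty {h : H2 // (h : H1) • t = t ∧ t ∈ goodSet (T := T) H2} :=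
        ⟨fun h => ht h.2.2⟩
      rw [Nat.card_of_isEmpty, Nat.card_of_isEmpty]
  -- per-h: subtype to fixedBy in goodSet
  have perh : ∀ h : H2, Nat.card {t : T // (h : H1) • t = t ∧ t ∈ goodSet (T := T) H2} =
      Nat.card (fixedBy ↥(goodSet (T := T) H2) h) := by
    intro h
    refine Nat.card_congr ⟨fun t => ⟨⟨t.1, t.2.2⟩, Subtype.ext t.2.1⟩,
      fun x => ⟨(x.1 : T), congrArg Subtype.val x.2, x.1.2⟩, fun t => rfl, fun x => rfl⟩
  calc Nat.card (orbitRel.Quotient H2 (goodSet (T := T) H2)) * Nat.card H2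
      = Fintype.card (orbitRel.Quotient H2 (goodSet (T := T) H2)) * Fintype.card H2 := by
        rw [Nat.card_eq_fintype_card, Nat.card_eq_fintype_card]
    _ = ∑ h : H2, Fintype.card (fixedBy ↥(goodSet (T := T) H2) h) :=
        (MulAction.sum_card_fixedBy_eq_card_orbits_mul_card_group H2 ↥(goodSet (T := T) H2)).symm
    _ = ∑ h : H2, Nat.card (fixedBy ↥(goodSet (T := T) H2) h) := by
        simp_rw [Nat.card_eq_fintype_card]
    _ = ∑ h : H2, Nat.card {t : T // (h : H1) • t = t ∧ t ∈ goodSet (T := T) H2} := by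
        simp_rw [perh]
    _ = ∑ t : T, Nat.card {h : H2 // (h : H1) • t = t ∧ t ∈ goodSet (T := T) H2} :=
        swap_count _
    _ = ∑ t : T, Nat.card {h : H2 // (σ * (h : H1)) • t = t} := by
        simp_rw [point]
    _ = ∑ h : H2, Nat.card {t : T // (σ * (h : H1)) • t = t} := (swap_count _).symm
    _ = ∑ h : H2, Nat.card (MulAction.fixedBy T (σ * (h : H1))) := by
        simp_rw [step1]
end

section
/- Suppose H2 is a normal subgroup of a finite group H1 and T is a finite set with an H1-action such that H1/H2 is cyclic and H2 acts transitively on T. Then the following are equivalent: (1) the diagonal is the unique subset of T × T that is simultaneously an H1-orbit and an H2-orbit (under the diagonal action); (2) every σ ∈ H1 with H1 = ⟨H2, σ⟩ has exactly one fixed point in T; (3) every σ ∈ H1 with H1 = ⟨H2, σ⟩ has at most one fixed point in T; (4) every σ ∈ H1 with H1 = ⟨H2, σ⟩ has at least one fixed point in T. -/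
open MulAction Finset

open scoped Classical

section Aux

variable {H1 : Type} [Group H1] {X : Type} [Fintype X] [MulAction H1 X]
variable (H2 : Subgroup H1) [Fintype H2]

private lemma aux_card_fiber (p q : X) (hq : q ∈ orbit H2 p) :
    ((univ : Finset H2).filter (fun h : H2 => (h : H1) • p = q)).card
      = Nat.card (stabilizer H2 p) := by
  obtain ⟨h0, hh0⟩ := hq
  have hh0' : (h0 : H1) • p = q := hh0
  rw [Nat.card_eq_fintype_card, ← Fintype.card_subtype]
  refine Fintype.card_congr (Equiv.subtypeEquiv (Equiv.mulLeft h0⁻¹) fun h => ?_)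
  rw [mem_stabilizer_iff]
  show (h : H1) • p = q ↔ ((h0⁻¹ * h : H2) : H1) • p = p
  rw [Subgroup.coe_mul, Subgroup.coe_inv, mul_smul, inv_smul_eq_iff, hh0']

private lemma aux_stab_card (p q : X) (hq : q ∈ orbit H2 p) :
    Nat.card (stabilizer H2 q) = Nat.card (stabilizer H2 p) := by
  have horb : orbit H2 q = orbit H2 p := orbit_eq_iff.2 hq
  have h1 : Nat.card (orbit H2 q) * Nat.card (stabilizer H2 q) = Nat.card H2 := by
    simpa [Nat.card_eq_fintype_card] using
      card_orbit_mul_card_stabilizer_eq_card_group H2 q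
  have h2 : Nat.card (orbit H2 p) * Nat.card (stabilizer H2 p) = Nat.card H2 := by
    simpa [Nat.card_eq_fintype_card] using
      card_orbit_mul_card_stabilizer_eq_card_group H2 p
  rw [horb] at h1
  have : Nonempty (orbit H2 p) := ⟨⟨p, mem_orbit_self p⟩⟩
  have hpos : 0 < Nat.card (orbit H2 p) := Nat.card_pos
  exact Nat.eq_of_mul_eq_mul_left hpos (h1.trans h2.symm)

private lemma aux_coset_sum (σ : H1) (p0 : X)
    (hinv : ∀ p ∈ orbit H2 p0, σ⁻¹ • p ∈ orbit H2 p0) :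
    ∑ h : H2, ((univ : Finset X).filter
        (fun p => p ∈ orbit H2 p0 ∧ (σ * (h : H1)) • p = p)).card
      = Nat.card H2 := by
  have hswap : ∑ h : H2, ((univ : Finset X).filter
        (fun p => p ∈ orbit H2 p0 ∧ (σ * (h : H1)) • p = p)).card
      = ∑ p ∈ (univ : Finset X).filter (· ∈ orbit H2 p0),
          ((univ : Finset H2).filter (fun h : H2 => (σ * (h : H1)) • p = p)).card := by
    simp_rw [Finset.card_filter]
    rw [Finset.sum_comm]
    rw [Finset.sum_filter]
    refine Finset.sum_congr rfl fun p _ => ?_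
    by_cases hp : p ∈ orbit H2 p0 <;> simp [hp]
  rw [hswap]
  have hterm : ∀ p ∈ (univ : Finset X).filter (· ∈ orbit H2 p0),
      ((univ : Finset H2).filter (fun h : H2 => (σ * (h : H1)) • p = p)).card
        = Nat.card (stabilizer H2 p0) := by
    intro p hp
    have hp' : p ∈ orbit H2 p0 := (Finset.mem_filter.1 hp).2
    have horb : orbit H2 p = orbit H2 p0 := orbit_eq_iff.2 hp'
    have hq : σ⁻¹ • p ∈ orbit H2 p := by rw [horb]; exact hinv p hp'
    have : ((univ : Finset H2).filter (fun h : H2 => (σ * (h : H1)) • p = p)).card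
        = ((univ : Finset H2).filter (fun h : H2 => (h : H1) • p = σ⁻¹ • p)).card := by
      apply Finset.card_bij (fun h _ => h) <;> intros <;>
        simp_all [mul_smul, ← eq_inv_smul_iff (g := σ), eq_comm]
    rw [this, aux_card_fiber H2 p _ hq, aux_stab_card H2 p0 p hp']
  rw [Finset.sum_congr rfl hterm, Finset.sum_const, smul_eq_mul]
  have hcard : ((univ : Finset X).filter (· ∈ orbit H2 p0)).card
      = Nat.card (orbit H2 p0) := by
    rw [Nat.card_eq_fintype_card, Fintype.card_subtype]
  rw [hcard]
  simpa [Nat.card_eq_fintype_card] using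
    card_orbit_mul_card_stabilizer_eq_card_group H2 p0

end Aux

set_option maxHeartbeats 1000000 in
/-- Lemma 4.3 of GTZ.
`H2 ⊴ H1` with cyclic quotient, `T` a finite nonempty set on which `H2` acts
transitively; TFAE: (1) the diagonal is the unique common `H1`- and `H2`-orbit
on `T × T`; (2) every `σ` with `⟨H2, σ⟩ = H1` has exactly one fixed point;
(3) at most one fixed point; (4) at least one fixed point. -/
theorem stmt1 {H1 T : Type} [Group H1] [Finite H1] [Finite T] [Nonempty T]
    [MulAction H1 T] (H2 : Subgroup H1) [H2.Normal] [IsCyclic (H1 ⧸ H2)]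
    (htrans : MulAction.IsPretransitive H2 T) :
    [ (∀ s : Set (T × T),
        ((∃ p, s = MulAction.orbit H1 p) ∧ (∃ p, s = MulAction.orbit H2 p)) ↔
          s = Set.diagonal T),
      (∀ σ : H1, H2 ⊔ Subgroup.zpowers σ = ⊤ → ∃! t : T, σ • t = t),
      (∀ σ : H1, H2 ⊔ Subgroup.zpowers σ = ⊤ →
        ∀ t t' : T, σ • t = t → σ • t' = t' → t = t'),
      (∀ σ : H1, H2 ⊔ Subgroup.zpowers σ = ⊤ → ∃ t : T, σ • t = t) ].TFAE := by
  classical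
  haveI := htrans
  letI : Fintype T := Fintype.ofFinite T
  letI : Fintype H1 := Fintype.ofFinite H1
  letI : Fintype H2 := Fintype.ofFinite H2
  obtain ⟨t0⟩ := ‹Nonempty T›
  -- basic orbit facts
  have horbT : ∀ t : T, orbit H2 t = Set.univ := fun t => orbit_eq_univ H2 t
  have hdiagH2 : ∀ t : T, orbit H2 (t, t) = Set.diagonal T := by
    intro t
    ext p
    constructor
    · rintro ⟨h, rfl⟩
      show ((h : H1) • t, (h : H1) • t) ∈ Set.diagonal T
      rfl
    · intro hp
      obtain ⟨h, hh⟩ := htrans.exists_smul_eq t p.1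
      have : p = (p.1, p.1) := by
        have := (Set.mem_diagonal_iff).1 hp
        exact Prod.ext rfl this.symm
      rw [this]
      exact ⟨h, by rw [← hh]; rfl⟩
  have hdiagH1 : orbit H1 (t0, t0) = Set.diagonal T := by
    ext p
    constructor
    · rintro ⟨g, rfl⟩
      show (g • t0, g • t0) ∈ Set.diagonal T
      rfl
    · intro hp
      have : p ∈ orbit H2 (t0, t0) := by rw [hdiagH2]; exact hp
      obtain ⟨h, rfl⟩ := this
      exact ⟨(h : H1), rfl⟩
  -- coset generation
  have hcoset : ∀ (σ : H1) (h : H2), H2 ⊔ Subgroup.zpowers σ = ⊤ →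
      H2 ⊔ Subgroup.zpowers (σ * (h : H1)) = ⊤ := by
    intro σ h hσ
    rw [eq_top_iff, ← hσ, sup_le_iff]
    refine ⟨le_sup_left, Subgroup.zpowers_le.2 ?_⟩
    have h1 : σ * (h : H1) ∈ H2 ⊔ Subgroup.zpowers (σ * (h : H1)) :=
      Subgroup.mem_sup_right (Subgroup.mem_zpowers _)
    have h2 : ((h : H1))⁻¹ ∈ H2 ⊔ Subgroup.zpowers (σ * (h : H1)) :=
      Subgroup.mem_sup_left (inv_mem h.2)
    simpa [mul_assoc] using mul_mem h1 h2
  -- a generating lift σ0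
  obtain ⟨g0, hg0⟩ := IsCyclic.exists_generator (α := H1 ⧸ H2)
  obtain ⟨σ0, rfl⟩ := QuotientGroup.mk'_surjective H2 g0
  have hσ0 : H2 ⊔ Subgroup.zpowers σ0 = ⊤ := by
    rw [eq_top_iff]
    intro x _
    obtain ⟨n, hn⟩ := hg0 (QuotientGroup.mk' H2 x)
    have hmem : x * (σ0 ^ n)⁻¹ ∈ H2 := by
      rw [← QuotientGroup.eq_one_iff]
      have hn' : ((σ0 : H1 ⧸ H2)) ^ n = (x : H1 ⧸ H2) := hn
      rw [QuotientGroup.mk_mul, QuotientGroup.mk_inv, QuotientGroup.mk_zpow, hn',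
        mul_inv_cancel]
    have : x = (x * (σ0 ^ n)⁻¹) * σ0 ^ n := by group
    rw [this]
    exact mul_mem (Subgroup.mem_sup_left hmem)
      (Subgroup.mem_sup_right (zpow_mem (Subgroup.mem_zpowers σ0) n))
  -- fixed point counts
  set f : H1 → ℕ := fun g => ((univ : Finset T).filter fun t => g • t = t).card with hf
  set f2 : H1 → ℕ := fun g => ((univ : Finset (T × T)).filter fun p => g • p = p).card with hf2
  have hsumf : ∀ σ : H1, ∑ h : H2, f (σ * (h : H1)) = Nat.card H2 := by
    intro σ
    have h0 := aux_coset_sum H2 σ t0 (by simp [horbT])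
    rw [← h0]
    refine Finset.sum_congr rfl fun h _ => ?_
    simp only [hf]
    congr 1
    apply Finset.filter_congr
    intro t _
    simp [horbT]
  have hfsq : ∀ g : H1, f2 g = f g * f g := by
    intro g
    simp only [hf, hf2]
    have : ((univ : Finset (T × T)).filter fun p => g • p = p)
        = ((univ : Finset T).filter fun t => g • t = t) ×ˢ
          ((univ : Finset T).filter fun t => g • t = t) := by
      rw [← Finset.univ_product_univ, ← Finset.filter_product]
      apply Finset.filter_congr
      intro p _
      constructor
      · intro hp
        exact ⟨congrArg Prod.fst hp, congrArg Prod.snd hp⟩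
      · intro hp
        exact Prod.ext hp.1 hp.2
    rw [this, Finset.card_product]
  have hdiag_sum : ∀ σ : H1,
      (∀ h : H2, ∀ p : T × T, (σ * (h : H1)) • p = p → p.1 = p.2) →
      ∑ h : H2, f2 (σ * (h : H1)) = Nat.card H2 := by
    intro σ hdiag
    have hinv : ∀ p ∈ orbit H2 (t0, t0), σ⁻¹ • p ∈ orbit H2 (t0, t0) := by
      intro p hp
      rw [hdiagH2] at hp ⊢
      have : p.1 = p.2 := hp
      show (σ⁻¹ • p).1 = (σ⁻¹ • p).2
      simp [this]
    have h0 := aux_coset_sum H2 σ (t0, t0) hinv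
    rw [← h0]
    refine Finset.sum_congr rfl fun h _ => ?_
    simp only [hf2]
    refine congrArg Finset.card (Finset.ext fun p => ?_)
    simp only [Finset.mem_filter, Finset.mem_univ, true_and]
    constructor
    · intro hp
      refine ⟨?_, hp⟩
      rw [hdiagH2]
      exact hdiag h p hp
    · intro hp
      exact hp.2
  -- key: invariant H2-orbits on T × T are diagonal under (1)
  have key : ∀ τ : H1, H2 ⊔ Subgroup.zpowers τ = ⊤ →
      (∀ s : Set (T × T),
        ((∃ p, s = MulAction.orbit H1 p) ∧ (∃ p, s = MulAction.orbit H2 p)) ↔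
          s = Set.diagonal T) →
      ∀ p : T × T, τ⁻¹ • p ∈ orbit H2 p → p.1 = p.2 := by
    intro τ hτ h1 p hp
    set s := orbit H2 p with hs
    have hH2s : ∀ x : H1, x ∈ H2 → ∀ q ∈ s, x • q ∈ s := by
      intro x hx q hq
      obtain ⟨h, rfl⟩ := hq
      exact ⟨⟨x, hx⟩ * h, by
        show ((x * (h : H1)) • p) = x • ((h : H1) • p)
        rw [mul_smul]⟩
    have hinv : ∀ q ∈ s, τ⁻¹ • q ∈ s := by
      rintro q ⟨h, rfl⟩
      have hmem : τ⁻¹ * (h : H1) * τ ∈ H2 :=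
        Subgroup.Normal.conj_mem' ‹H2.Normal› _ h.2 τ
      obtain ⟨h', hh'⟩ := hp
      have hh'' : (h' : H1) • p = τ⁻¹ • p := hh'
      refine ⟨⟨(τ⁻¹ * (h : H1) * τ) * (h' : H1), mul_mem hmem h'.2⟩, ?_⟩
      show ((τ⁻¹ * (h : H1) * τ) * (h' : H1)) • p = τ⁻¹ • ((h : H1) • p)
      rw [mul_smul, hh'', smul_smul, smul_smul]
      congr 1
      group
    let K : Subgroup H1 :=
      { carrier := {g : H1 | ∀ q ∈ s, g • q ∈ s}
        one_mem' := by intro q hq; simpa using hq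
        mul_mem' := by
          intro a b ha hb q hq
          rw [mul_smul]
          exact ha _ (hb _ hq)
        inv_mem' := by
          intro a ha
          have hfin : s.Finite := Set.toFinite s
          have hmt : Set.MapsTo (a • ·) s s := ha
          have hbij := (hfin.injOn_iff_bijOn_of_mapsTo hmt).1
            ((MulAction.injective a).injOn)
          intro q hq
          obtain ⟨q', hq', hqq⟩ := hbij.surjOn hq
          have : a⁻¹ • q = q' := by rw [← hqq, inv_smul_smul]
          rw [this]
          exact hq' }
    have hτK : τ ∈ K := by
      have : τ⁻¹ ∈ K := hinv
      simpa using K.inv_mem this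
    have hKtop : ∀ g : H1, g ∈ K := by
      have : H2 ⊔ Subgroup.zpowers τ ≤ K :=
        sup_le (fun x hx => hH2s x hx) (Subgroup.zpowers_le.2 hτK)
      rw [hτ] at this
      exact fun g => this (Subgroup.mem_top g)
    have hs1 : s = orbit H1 p := by
      apply Set.Subset.antisymm
      · rintro q ⟨h, rfl⟩
        exact ⟨(h : H1), rfl⟩
      · rintro q ⟨g, rfl⟩
        exact hKtop g p (mem_orbit_self p)
    have : s = Set.diagonal T := (h1 s).1 ⟨⟨p, hs1⟩, ⟨p, hs⟩⟩
    have hps : p ∈ s := mem_orbit_self p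
    rw [this] at hps
    exact hps
  -- common step: uniqueness of fixed points on the coset of σ0 gives (1)
  have uniq_to_one :
      (∀ h : H2, ∀ t t' : T, (σ0 * (h : H1)) • t = t → (σ0 * (h : H1)) • t' = t' → t = t') →
      (∀ s : Set (T × T),
        ((∃ p, s = MulAction.orbit H1 p) ∧ (∃ p, s = MulAction.orbit H2 p)) ↔
          s = Set.diagonal T) := by
    intro huniq s
    constructor
    · rintro ⟨⟨p1, hp1⟩, ⟨p2, hp2⟩⟩
      have hinv : ∀ p ∈ orbit H2 p2, σ0⁻¹ • p ∈ orbit H2 p2 := by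
        intro p hp
        rw [← hp2, hp1] at hp ⊢
        obtain ⟨g, rfl⟩ := hp
        exact ⟨σ0⁻¹ * g, by show (σ0⁻¹ * g) • p1 = σ0⁻¹ • (g • p1); rw [mul_smul]⟩
      have hsum := aux_coset_sum H2 σ0 p2 hinv
      have hpos := lt_of_lt_of_eq (Nat.card_pos (α := H2)) hsum.symm
      obtain ⟨h, -, hlt⟩ := Finset.exists_lt_of_sum_lt
        (lt_of_eq_of_lt Finset.sum_const_zero hpos)
      obtain ⟨p, hpmem⟩ := Finset.card_pos.1 hlt
      simp only [Finset.mem_filter] at hpmem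
      have hporb : p ∈ orbit H2 p2 := hpmem.2.1
      have hpfix : (σ0 * (h : H1)) • p = p := hpmem.2.2
      have heq : p.1 = p.2 := by
        refine huniq h p.1 p.2 ?_ ?_
        · exact congrArg Prod.fst hpfix
        · exact congrArg Prod.snd hpfix
      have hsorb : s = orbit H2 p := by
        rw [hp2, orbit_eq_iff.2 hporb]
      rw [hsorb]
      have : p = (p.1, p.1) := Prod.ext rfl heq.symm
      rw [this, hdiagH2]
    · rintro rfl
      exact ⟨⟨(t0, t0), hdiagH1.symm⟩, ⟨(t0, t0), (hdiagH2 t0).symm⟩⟩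
  tfae_have 1 → 2 := by
    intro h1 σ hσ
    have hzero : ∀ h : H2, ∀ p : T × T, (σ * (h : H1)) • p = p → p.1 = p.2 := by
      intro h p hfix
      refine key (σ * (h : H1)) (hcoset σ h hσ) h1 p ?_
      have : (σ * (h : H1))⁻¹ • p = p := by
        conv_lhs => rw [← hfix]
        rw [inv_smul_smul]
      rw [this]
      exact mem_orbit_self p
    have hsum2 := hdiag_sum σ hzero
    have hsum1 := hsumf σ
    have hle : ∀ h ∈ (univ : Finset H2), f (σ * (h : H1)) ≤ f2 (σ * (h : H1)) := by
      intro h _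
      rw [hfsq]
      nlinarith [f (σ * (h : H1))]
    have heqs : ∀ h ∈ (univ : Finset H2), f (σ * (h : H1)) = f2 (σ * (h : H1)) :=
      (Finset.sum_eq_sum_iff_of_le hle).1 (hsum1.trans hsum2.symm)
    have hle1 : ∀ h ∈ (univ : Finset H2), f (σ * (h : H1)) ≤ 1 := by
      intro h hh
      have := (heqs h hh).symm
      rw [hfsq] at this
      nlinarith [f (σ * (h : H1))]
    have hone : ∀ h ∈ (univ : Finset H2), f (σ * (h : H1)) = 1 := by
      have hcardsum : ∑ _h : H2, 1 = Nat.card H2 := by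
        simp [Nat.card_eq_fintype_card]
      have := (Finset.sum_eq_sum_iff_of_le hle1).1 (hsum1.trans hcardsum.symm)
      exact this
    have hfσ : f σ = 1 := by
      have := hone 1 (Finset.mem_univ 1)
      simpa using this
    simp only [hf] at hfσ
    rw [Finset.card_eq_one] at hfσ
    obtain ⟨t, ht⟩ := hfσ
    refine ⟨t, ?_, ?_⟩
    · have : t ∈ (univ : Finset T).filter fun t => σ • t = t := by
        rw [ht]; exact Finset.mem_singleton_self t
      exact (Finset.mem_filter.1 this).2
    · intro t' ht'
      have : t' ∈ (univ : Finset T).filter fun t => σ • t = t :=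
        Finset.mem_filter.2 ⟨Finset.mem_univ _, ht'⟩
      rw [ht] at this
      exact Finset.mem_singleton.1 this
  tfae_have 2 → 3 := by
    intro h σ hσ t t' ht ht'
    obtain ⟨u, -, huniq⟩ := h σ hσ
    rw [huniq t ht, huniq t' ht']
  tfae_have 2 → 4 := by
    intro h σ hσ
    obtain ⟨u, hu, -⟩ := h σ hσ
    exact ⟨u, hu⟩
  tfae_have 3 → 1 := by
    intro h3
    exact uniq_to_one (fun h t t' => h3 (σ0 * (h : H1)) (hcoset σ0 h hσ0) t t')
  tfae_have 4 → 1 := by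
    intro h4
    apply uniq_to_one
    have hge : ∀ h ∈ (univ : Finset H2), 1 ≤ f (σ0 * (h : H1)) := by
      intro h _
      obtain ⟨t, ht⟩ := h4 (σ0 * (h : H1)) (hcoset σ0 h hσ0)
      simp only [hf]
      exact Finset.card_pos.2 ⟨t, Finset.mem_filter.2 ⟨Finset.mem_univ _, ht⟩⟩
    have hone : ∀ h ∈ (univ : Finset H2), f (σ0 * (h : H1)) = 1 := by
      have hcardsum : ∑ _h : H2, 1 = Nat.card H2 := by
        simp [Nat.card_eq_fintype_card]
      have := (Finset.sum_eq_sum_iff_of_le hge).1 (hcardsum.trans (hsumf σ0).symm)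
      exact fun h hh => (this h hh).symm
    intro h t t' ht ht'
    have h1 := hone h (Finset.mem_univ h)
    simp only [hf] at h1
    have hle := Finset.card_le_one.1 (le_of_eq h1)
    exact hle t (Finset.mem_filter.2 ⟨Finset.mem_univ _, ht⟩)
      t' (Finset.mem_filter.2 ⟨Finset.mem_univ _, ht'⟩)
  tfae_finish
end

section
/- Let H2 be a normal subgroup of a finite group H1 with H1/H2 cyclic, and let T be a finite set with a transitive H1-action on which H2 also acts transitively. If every σ ∈ H1 generating H1 together with H2 has at least one fixed point in T, then every such σ has exactly one fixed point in T. -/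
/-- `H2 ⊴ H1` with cyclic quotient, `T` finite nonempty with transitive `H1`-action
on which `H2` also acts transitively. If every `σ ∈ H1` with `⟨H2, σ⟩ = H1` has
at least one fixed point in `T`, then every such `σ` has exactly one. -/
theorem stmt2 {H1 T : Type} [Group H1] [Finite H1] [Finite T] [Nonempty T]
    [MulAction H1 T] [MulAction.IsPretransitive H1 T]
    (H2 : Subgroup H1) [H2.Normal] [IsCyclic (H1 ⧸ H2)]
    (htrans : MulAction.IsPretransitive H2 T)
    (hfix : ∀ σ : H1, H2 ⊔ Subgroup.zpowers σ = ⊤ → ∃ t : T, σ • t = t) :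
    ∀ σ : H1, H2 ⊔ Subgroup.zpowers σ = ⊤ → ∃! t : T, σ • t = t := by
  classical
  cases nonempty_fintype T
  cases nonempty_fintype H1
  intro σ hσ
  -- every element of the coset σH2 also generates H1 together with H2
  have hgen : ∀ h : H2, H2 ⊔ Subgroup.zpowers (σ * (h : H1)) = ⊤ := by
    intro h
    rw [eq_top_iff, ← hσ, sup_le_iff]
    refine ⟨le_sup_left, ?_⟩
    rw [Subgroup.zpowers_le]
    have hmem : σ * (h : H1) ∈ H2 ⊔ Subgroup.zpowers (σ * (h : H1)) :=
      Subgroup.mem_sup_right (Subgroup.mem_zpowers _)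
    have hmem2 : ((h : H1))⁻¹ ∈ H2 ⊔ Subgroup.zpowers (σ * (h : H1)) :=
      Subgroup.mem_sup_left (inv_mem h.2)
    simpa using mul_mem hmem hmem2
  -- fixed point counting function
  set F : H1 → ℕ := fun τ => (Finset.univ.filter fun t : T => τ • t = t).card with hF
  -- each F (σ * h) ≥ 1
  have hpos : ∀ h : H2, 1 ≤ F (σ * (h : H1)) := by
    intro h
    obtain ⟨t, ht⟩ := hfix _ (hgen h)
    have : t ∈ Finset.univ.filter fun t : T => (σ * (h : H1)) • t = t := by
      simp [ht]
    exact Finset.card_pos.mpr ⟨t, this⟩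
  -- for each t, the number of h ∈ H2 with (σh) • t = t equals the size of the
  -- stabilizer of t in H2
  have hcoset : ∀ t : T,
      (Finset.univ.filter fun h : H2 => (σ * (h : H1)) • t = t).card =
      (Finset.univ.filter fun h : H2 => (h : H1) • t = t).card := by
    intro t
    obtain ⟨h0, hh0⟩ := htrans.exists_smul_eq t (σ⁻¹ • t)
    have hh0' : (h0 : H1) • t = σ⁻¹ • t := hh0
    have key : ∀ h : H2, ((σ * (h : H1)) • t = t) ↔ ((h : H1) • t = σ⁻¹ • t) := by
      intro h
      rw [mul_smul, eq_inv_smul_iff]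
    refine Finset.card_equiv (Equiv.mulLeft h0⁻¹) ?_
    intro h
    simp only [Finset.mem_filter, Finset.mem_univ, true_and, Equiv.coe_mulLeft]
    rw [key h]
    have hcoe : ((h0⁻¹ * h : H2) : H1) = ((h0 : H1))⁻¹ * (h : H1) := rfl
    constructor
    · intro hh
      rw [hcoe, mul_smul, hh, ← hh0', inv_smul_smul]
    · intro hh
      rw [hcoe, mul_smul, inv_smul_eq_iff] at hh
      rw [hh, hh0']
  -- orbit-stabilizer: for each t the stabilizer count times |T| is |H2|
  have hstab : ∀ t : T,
      (Finset.univ.filter fun h : H2 => (h : H1) • t = t).card * Fintype.card T =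
        Fintype.card H2 := by
    intro t
    have h1 : (Finset.univ.filter fun h : H2 => (h : H1) • t = t).card =
        Fintype.card (MulAction.stabilizer H2 t) := by
      have hfe : (Finset.univ.filter fun h : H2 => (h : H1) • t = t) =
          Finset.univ.filter fun h : H2 => h ∈ MulAction.stabilizer H2 t := by
        ext h
        simp [MulAction.mem_stabilizer_iff, Subgroup.smul_def]
      rw [hfe, Fintype.card_subtype]
    have h2 : Fintype.card (MulAction.orbit H2 t) = Fintype.card T := by
      refine Fintype.card_congr (Equiv.subtypeUnivEquiv ?_)
      intro x
      rw [MulAction.orbit_eq_univ H2 t]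
      trivial
    have h3 := MulAction.card_orbit_mul_card_stabilizer_eq_card_group H2 t
    rw [h1, ← h3, h2, mul_comm]
  -- double counting: total number of fixed pairs over the coset is |H2|
  have hsum : (∑ h : H2, F (σ * (h : H1))) = Fintype.card H2 := by
    have e1 : (∑ h : H2, F (σ * (h : H1))) =
        ∑ t : T, (Finset.univ.filter fun h : H2 => (σ * (h : H1)) • t = t).card := by
      simp only [hF, Finset.card_filter]
      exact Finset.sum_comm
    have e2 : (∑ t : T, (Finset.univ.filter fun h : H2 => (σ * (h : H1)) • t = t).card)
        * Fintype.card T = Fintype.card H2 * Fintype.card T := by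
      rw [Finset.sum_mul]
      have e3 : ∀ t : T, (Finset.univ.filter fun h : H2 => (σ * (h : H1)) • t = t).card
          * Fintype.card T = Fintype.card H2 := by
        intro t; rw [hcoset t]; exact hstab t
      rw [Finset.sum_congr rfl fun t _ => e3 t]
      simp [Finset.sum_const, mul_comm]
    have hT : 0 < Fintype.card T := Fintype.card_pos
    rw [e1]
    exact Nat.eq_of_mul_eq_mul_right hT e2
  -- conclude each F (σ * h) = 1
  have hone : ∀ h : H2, F (σ * (h : H1)) = 1 := by
    have h1 : (∑ _h : H2, 1) = ∑ h : H2, F (σ * (h : H1)) := by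
      rw [hsum]; simp
    have h2 := (Finset.sum_eq_sum_iff_of_le (fun (h : H2) _ => hpos h)).mp h1
    intro h
    exact (h2 h (Finset.mem_univ h)).symm
  have hFσ : (Finset.univ.filter fun t : T => σ • t = t).card = 1 := by
    have := hone 1
    simpa [hF] using this
  obtain ⟨a, ha⟩ := Finset.card_eq_one.mp hFσ
  have hmem : ∀ t : T, σ • t = t ↔ t = a := by
    intro t
    constructor
    · intro ht
      have : t ∈ Finset.univ.filter fun t : T => σ • t = t := by simp [ht]
      rw [ha] at this
      exact Finset.mem_singleton.mp this
    · intro ht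
      have ha2 : a ∈ Finset.univ.filter fun t : T => σ • t = t := by
        rw [ha]; exact Finset.mem_singleton_self a
      rw [ht]
      exact (Finset.mem_filter.mp ha2).2
  exact ⟨a, (hmem a).mpr rfl, fun t ht => (hmem t).mp ht⟩
end

section
/- Let H2 be a normal subgroup of a finite group H1 with H1/H2 cyclic, and suppose H2 acts transitively on a finite set T. If some element σ ∈ H1 with ⟨H2, σ⟩ = H1 has two distinct fixed points in T, then there exist two distinct points of T lying in a common orbit of both H1 and H2 on T × T outside the diagonal; equivalently, the diagonal is not the unique common H1- and H2-orbit on T × T. -/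
/-- `H2 ⊴ H1` with cyclic quotient, `H2` transitive on the finite set `T`. If some
`σ ∈ H1` with `⟨H2, σ⟩ = H1` has two distinct fixed points in `T`, then there
is a common `H1`- and `H2`-orbit on `T × T` other than the diagonal, so the
diagonal is not the unique common orbit. -/
theorem stmt3 {H1 T : Type} [Group H1] [Finite H1] [Finite T]
    [MulAction H1 T] (H2 : Subgroup H1) [H2.Normal] [IsCyclic (H1 ⧸ H2)]
    (htrans : MulAction.IsPretransitive H2 T)
    (σ : H1) (hσ : H2 ⊔ Subgroup.zpowers σ = ⊤)
    (t₁ t₂ : T) (hne : t₁ ≠ t₂) (h₁ : σ • t₁ = t₁) (h₂ : σ • t₂ = t₂) :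
    ∃ s : Set (T × T), (∃ p, s = MulAction.orbit H1 p) ∧
      (∃ p, s = MulAction.orbit H2 p) ∧ s ≠ Set.diagonal T := by
  have hfix : ∀ x ∈ Subgroup.zpowers σ, x • (t₁, t₂) = (t₁, t₂) := by
    rintro x ⟨k, rfl⟩
    have key : ∀ t : T, σ • t = t → σ ^ k • t = t := by
      intro t ht
      have : σ ∈ MulAction.stabilizer H1 t := ht
      exact (MulAction.stabilizer H1 t).zpow_mem this k
    have e1 := key t₁ h₁
    have e2 := key t₂ h₂
    simp [Prod.smul_def, e1, e2]
  refine ⟨MulAction.orbit H2 (t₁, t₂), ⟨(t₁, t₂), ?_⟩, ⟨(t₁, t₂), rfl⟩, ?_⟩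
  · ext x
    constructor
    · rintro ⟨⟨h, hh⟩, rfl⟩
      exact ⟨h, rfl⟩
    · rintro ⟨g, rfl⟩
      have hg : (g : H1) ∈ H2 ⊔ Subgroup.zpowers σ := hσ ▸ Subgroup.mem_top g
      rw [← SetLike.mem_coe, Subgroup.normal_mul] at hg
      obtain ⟨h, hh, x, hx, rfl⟩ := hg
      refine ⟨⟨h, hh⟩, ?_⟩
      show (⟨h, hh⟩ : H2) • (t₁, t₂) = (h * x) • (t₁, t₂)
      rw [mul_smul, hfix x hx]
      rfl
  · intro hdiag
    have : (t₁, t₂) ∈ Set.diagonal T := hdiag ▸ MulAction.mem_orbit_self _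
    exact hne this
end

section
/- Let A be a finite group, G ⊴ A with A/G cyclic generated by the coset Φ (a fixed coset of G in A), and A1 ≤ A a subgroup with G1 = G ∩ A1 such that G acts transitively on S := A/A1. For a subgroup B ≤ A write Frob(B) := Φ ∩ B. Then the following are equivalent: (a) for every σ ∈ A \ A1, Frob(A1) ∩ σ Frob(A1) σ^{-1} restricted appropriately is empty, i.e., Φ ∩ A1 ∩ σA1σ^{-1} = ∅ for all σ ∈ A with σ ∉ A1; (b) Φ ∩ A = ⋃_{σ ∈ A} (Φ ∩ σA1σ^{-1}); (c) every element of Φ has exactly one fixed point on S. -/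
open Finset in
private lemma card_filter_equiv {A B : Type} [Fintype A] [Fintype B] (e : A ≃ B)
    (p : A → Prop) (q : B → Prop) [DecidablePred p] [DecidablePred q]
    (h : ∀ a, p a ↔ q (e a)) :
    (Finset.univ.filter p).card = (Finset.univ.filter q).card := by
  refine Finset.card_bij' (fun a _ => e a) (fun b _ => e.symm b) ?_ ?_ ?_ ?_ <;>
    simp_all [Finset.mem_filter]

open Finset in
private lemma filter_card_eq_one {α : Type} [Fintype α] (p : α → Prop) [DecidablePred p] :
    (Finset.univ.filter p).card = 1 ↔ ∃! a, p a := by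
  rw [Finset.card_eq_one]
  constructor
  · rintro ⟨x, hx⟩
    have hxp : p x := by
      have : x ∈ Finset.univ.filter p := hx ▸ Finset.mem_singleton_self x
      simpa using this
    refine ⟨x, hxp, fun y hy => ?_⟩
    have hy' : y ∈ Finset.univ.filter p := by simpa using hy
    rw [hx] at hy'
    simpa using hy'
  · rintro ⟨x, hx, hu⟩
    refine ⟨x, ?_⟩
    ext y
    simp only [Finset.mem_filter, Finset.mem_univ, true_and, Finset.mem_singleton]
    exact ⟨fun h => hu y h, fun h => h ▸ hx⟩
/-- Frobenius coset characterizations.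
`A` finite, `G ⊴ A` with cyclic quotient generated by the coset `Φ = φG`,
`A1 ≤ A` with `G` transitive on `S = A/A1`. Writing `Φ ∩ σA1σ⁻¹` via
`σ⁻¹ a σ ∈ A1`, TFAE:
(a) `Φ ∩ A1 ∩ σA1σ⁻¹ = ∅` for every `σ ∈ A \ A1`;
(b) `Φ = ⋃_{σ ∈ A} (Φ ∩ σA1σ⁻¹)`;
(c) every element of `Φ` has exactly one fixed point on `S = A/A1`. -/
theorem stmt6 {A : Type} [Group A] [Finite A]
    (G : Subgroup A) [G.Normal] [IsCyclic (A ⧸ G)]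
    (φ : A) (hφ : ∀ x : A ⧸ G, x ∈ Subgroup.zpowers ((φ : A ⧸ G)))
    (A1 : Subgroup A)
    (htrans : Function.Surjective (fun g : G => ((g : A) : A ⧸ A1))) :
    [ (∀ σ : A, σ ∉ A1 → ∀ a : A, ((a : A ⧸ G) = (φ : A ⧸ G)) →
        ¬(a ∈ A1 ∧ σ⁻¹ * a * σ ∈ A1)),
      ({a : A | (a : A ⧸ G) = (φ : A ⧸ G)}
        = ⋃ σ : A, {a : A | (a : A ⧸ G) = (φ : A ⧸ G)} ∩
            {a : A | σ⁻¹ * a * σ ∈ A1}),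
      (∀ a : A, ((a : A ⧸ G) = (φ : A ⧸ G)) → ∃! s : A ⧸ A1, a • s = s) ].TFAE := by
  classical
  cases nonempty_fintype A
  letI : Fintype (A ⧸ A1) := Fintype.ofFinite _
  letI : Fintype (A ⧸ G) := Fintype.ofFinite _
  -- the quotient A ⧸ G is commutative
  have comm : ∀ x y : A ⧸ G, x * y = y * x := by
    intro x y
    obtain ⟨m, hm⟩ := hφ x
    obtain ⟨n, hn⟩ := hφ y
    rw [← hm, ← hn, ← zpow_add, ← zpow_add, add_comm]
  -- conjugation fixes the class mod G
  have hconj : ∀ (σ a : A), ((σ⁻¹ * a * σ : A) : A ⧸ G) = (a : A ⧸ G) := by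
    intro σ a
    show ((σ : A ⧸ G)⁻¹ * (a : A ⧸ G) * (σ : A ⧸ G)) = (a : A ⧸ G)
    rw [comm _ (a : A ⧸ G), mul_assoc]
    simp
  -- fixed point criterion
  have fix_iff : ∀ a σ : A, a • ((σ : A ⧸ A1)) = ↑σ ↔ σ⁻¹ * a * σ ∈ A1 := by
    intro a σ
    show ((a * σ : A) : A ⧸ A1) = ↑σ ↔ _
    have e : (a * σ)⁻¹ * σ = (σ⁻¹ * a * σ)⁻¹ := by group
    rw [QuotientGroup.eq, e, inv_mem_iff]
  -- an element a1 ∈ Φ ∩ A1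
  obtain ⟨g, hg⟩ := htrans ((φ⁻¹ : A) : A ⧸ A1)
  have hA1 : (g : A)⁻¹ * φ⁻¹ ∈ A1 := QuotientGroup.eq.mp hg
  have ha1A1 : φ * (g : A) ∈ A1 := by
    have := A1.inv_mem hA1
    simpa [mul_inv_rev] using this
  have ha1Φ : ((φ * (g : A) : A) : A ⧸ G) = (φ : A ⧸ G) := by
    symm
    rw [QuotientGroup.eq]
    simp [inv_mul_cancel_left, g.2]
  set a1 : A := φ * (g : A) with ha1def
  -- cardinalities
  set n1 : ℕ := (Finset.univ.filter
      (fun a : A => ((a : A ⧸ G) = (φ : A ⧸ G)) ∧ a ∈ A1)).card with hn1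
  set nG1 : ℕ := (Finset.univ.filter (fun a : A => a ∈ G ∧ a ∈ A1)).card with hnG1
  -- n1 = |G1|
  have hn1G1 : n1 = nG1 := by
    refine card_filter_equiv (Equiv.mulLeft a1⁻¹) _ _ ?_
    intro a
    simp only [Equiv.coe_mulLeft]
    constructor
    · rintro ⟨h1, h2⟩
      refine ⟨?_, (mul_mem_cancel_left (A1.inv_mem ha1A1)).mpr h2⟩
      have : ((a1 : A) : A ⧸ G) = (a : A ⧸ G) := ha1Φ.trans h1.symm
      exact QuotientGroup.eq.mp this
    · rintro ⟨h1, h2⟩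
      refine ⟨?_, (mul_mem_cancel_left (A1.inv_mem ha1A1)).mp h2⟩
      have : ((a1 : A) : A ⧸ G) = (a : A ⧸ G) := QuotientGroup.eq.mpr h1
      exact this.symm.trans ha1Φ
  -- |Φ| = |G|
  have hΦG : (Finset.univ.filter (fun a : A => (a : A ⧸ G) = (φ : A ⧸ G))).card
      = (Finset.univ.filter (fun a : A => a ∈ G)).card := by
    refine card_filter_equiv (Equiv.mulLeft φ⁻¹) _ _ ?_
    intro a
    simp only [Equiv.coe_mulLeft]
    constructor
    · intro h; exact QuotientGroup.eq.mp h.symm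
    · intro h; exact (QuotientGroup.eq.mpr h).symm
  -- |G| = |S| * |G1|
  have hGsum : (Finset.univ.filter (fun a : A => a ∈ G)).card
      = Fintype.card (A ⧸ A1) * nG1 := by
    rw [Finset.card_eq_sum_card_fiberwise (f := fun a : A => (a : A ⧸ A1))
      (t := Finset.univ) (fun x _ => Finset.mem_univ _)]
    have h2 : ∀ s : A ⧸ A1, ((Finset.univ.filter (fun a : A => a ∈ G)).filter
        (fun a : A => (a : A ⧸ A1) = s)).card = nG1 := by
      intro s
      rw [Finset.filter_filter]
      obtain ⟨g0, hg0⟩ := htrans s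
      refine card_filter_equiv (Equiv.mulLeft (g0 : A)⁻¹) _ _ ?_
      intro a
      simp only [Equiv.coe_mulLeft]
      constructor
      · rintro ⟨h1, h2⟩
        refine ⟨(mul_mem_cancel_left (G.inv_mem g0.2)).mpr h1, ?_⟩
        exact QuotientGroup.eq.mp (hg0.trans h2.symm)
      · rintro ⟨h1, h2⟩
        exact ⟨(mul_mem_cancel_left (G.inv_mem g0.2)).mp h1,
          (QuotientGroup.eq.mpr h2).symm.trans hg0⟩
    rw [Finset.sum_congr rfl fun s _ => h2 s, Finset.sum_const, smul_eq_mul,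
      Finset.card_univ]
  -- each stabilizer fiber in Φ has n1 elements
  have hfiber : ∀ s : A ⧸ A1,
      (Finset.univ.filter (fun a : A =>
        ((a : A ⧸ G) = (φ : A ⧸ G)) ∧ a • s = s)).card = n1 := by
    intro s
    obtain ⟨σ, rfl⟩ := QuotientGroup.mk_surjective s
    refine card_filter_equiv
      ⟨fun a => σ⁻¹ * a * σ, fun b => σ * b * σ⁻¹, fun a => by group, fun b => by group⟩
      _ _ ?_
    intro a
    simp only [Equiv.coe_fn_mk]
    rw [hconj, fix_iff]
  -- the key counting identity
  have key : ∑ a ∈ Finset.univ.filter (fun a : A => (a : A ⧸ G) = (φ : A ⧸ G)),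
      (Finset.univ.filter (fun s : A ⧸ A1 => a • s = s)).card
      = (Finset.univ.filter (fun a : A => (a : A ⧸ G) = (φ : A ⧸ G))).card :=
    calc ∑ a ∈ Finset.univ.filter (fun a : A => (a : A ⧸ G) = (φ : A ⧸ G)),
        (Finset.univ.filter (fun s : A ⧸ A1 => a • s = s)).card
        = ∑ a ∈ Finset.univ.filter (fun a : A => (a : A ⧸ G) = (φ : A ⧸ G)),
            ∑ s : A ⧸ A1, if a • s = s then 1 else 0 := by
          simp only [Finset.card_filter]
      _ = ∑ s : A ⧸ A1, ∑ a ∈ Finset.univ.filter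
            (fun a : A => (a : A ⧸ G) = (φ : A ⧸ G)), if a • s = s then 1 else 0 :=
          Finset.sum_comm
      _ = ∑ s : A ⧸ A1, ((Finset.univ.filter
            (fun a : A => (a : A ⧸ G) = (φ : A ⧸ G))).filter
              (fun a : A => a • s = s)).card := by
          simp only [Finset.card_filter]
      _ = ∑ _s : A ⧸ A1, n1 := by
          refine Finset.sum_congr rfl fun s _ => ?_
          rw [Finset.filter_filter]
          exact hfiber s
      _ = Fintype.card (A ⧸ A1) * n1 := by
          rw [Finset.sum_const, smul_eq_mul, Finset.card_univ]
      _ = (Finset.univ.filter (fun a : A => (a : A ⧸ G) = (φ : A ⧸ G))).card := by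
          rw [hn1G1, ← hGsum, hΦG]
  -- membership in Φ
  have memΦ : ∀ a : A, (a ∈ Finset.univ.filter
      (fun a : A => (a : A ⧸ G) = (φ : A ⧸ G))) ↔ ((a : A ⧸ G) = (φ : A ⧸ G)) := by
    intro a; simp
  -- forcing from the counting identity
  have hbelow : (∀ a ∈ Finset.univ.filter (fun a : A => (a : A ⧸ G) = (φ : A ⧸ G)),
      (Finset.univ.filter (fun s : A ⧸ A1 => a • s = s)).card ≤ 1) →
      ∀ a ∈ Finset.univ.filter (fun a : A => (a : A ⧸ G) = (φ : A ⧸ G)),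
      (Finset.univ.filter (fun s : A ⧸ A1 => a • s = s)).card = 1 := by
    intro h a ha
    by_contra hne
    have hlt := Finset.sum_lt_sum (f := fun a : A =>
        (Finset.univ.filter (fun s : A ⧸ A1 => a • s = s)).card)
      (g := fun _ => 1) (fun i hi => h i hi) ⟨a, ha, lt_of_le_of_ne (h a ha) hne⟩
    rw [key, Finset.sum_const, smul_eq_mul, mul_one] at hlt
    exact lt_irrefl _ hlt
  have habove : (∀ a ∈ Finset.univ.filter (fun a : A => (a : A ⧸ G) = (φ : A ⧸ G)),
      1 ≤ (Finset.univ.filter (fun s : A ⧸ A1 => a • s = s)).card) →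
      ∀ a ∈ Finset.univ.filter (fun a : A => (a : A ⧸ G) = (φ : A ⧸ G)),
      (Finset.univ.filter (fun s : A ⧸ A1 => a • s = s)).card = 1 := by
    intro h a ha
    by_contra hne
    have hlt := Finset.sum_lt_sum (f := fun _ : A => 1)
      (g := fun a : A => (Finset.univ.filter (fun s : A ⧸ A1 => a • s = s)).card)
      (fun i hi => h i hi) ⟨a, ha, lt_of_le_of_ne (h a ha) (fun e => hne e.symm)⟩
    rw [key, Finset.sum_const, smul_eq_mul, mul_one] at hlt
    exact lt_irrefl _ hlt
  -- existence of a fixed point as conjugacy condition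
  have hex : ∀ a : A, (∃ σ : A, σ⁻¹ * a * σ ∈ A1) ↔ ∃ s : A ⧸ A1, a • s = s := by
    intro a
    constructor
    · rintro ⟨σ, hσ⟩; exact ⟨↑σ, (fix_iff a σ).mpr hσ⟩
    · rintro ⟨s, hs⟩
      obtain ⟨σ, rfl⟩ := QuotientGroup.mk_surjective s
      exact ⟨σ, (fix_iff a σ).mp hs⟩
  -- unfolding condition (b)
  have hbiff : ({a : A | (a : A ⧸ G) = (φ : A ⧸ G)}
        = ⋃ σ : A, {a : A | (a : A ⧸ G) = (φ : A ⧸ G)} ∩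
            {a : A | σ⁻¹ * a * σ ∈ A1})
      ↔ ∀ a : A, ((a : A ⧸ G) = (φ : A ⧸ G)) → ∃ σ : A, σ⁻¹ * a * σ ∈ A1 := by
    constructor
    · intro h a ha
      have hmem : a ∈ ⋃ σ : A, {a : A | (a : A ⧸ G) = (φ : A ⧸ G)} ∩
          {a : A | σ⁻¹ * a * σ ∈ A1} := by rw [← h]; exact ha
      simp only [Set.mem_iUnion, Set.mem_inter_iff, Set.mem_setOf_eq] at hmem
      obtain ⟨σ, -, hσ⟩ := hmem
      exact ⟨σ, hσ⟩
    · intro h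
      apply Set.Subset.antisymm
      · intro a ha
        obtain ⟨σ, hσ⟩ := h a ha
        exact Set.mem_iUnion.mpr ⟨σ, ha, hσ⟩
      · intro a ha
        simp only [Set.mem_iUnion, Set.mem_inter_iff, Set.mem_setOf_eq] at ha
        obtain ⟨σ, h1, -⟩ := ha
        exact h1
  -- unfolding condition (a)
  have hamost : (∀ σ : A, σ ∉ A1 → ∀ a : A, ((a : A ⧸ G) = (φ : A ⧸ G)) →
        ¬(a ∈ A1 ∧ σ⁻¹ * a * σ ∈ A1)) ↔
      ∀ a : A, ((a : A ⧸ G) = (φ : A ⧸ G)) →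
        ∀ s t : A ⧸ A1, a • s = s → a • t = t → s = t := by
    constructor
    · intro h a ha s t hs ht
      obtain ⟨τ1, rfl⟩ := QuotientGroup.mk_surjective s
      obtain ⟨τ2, rfl⟩ := QuotientGroup.mk_surjective t
      by_contra hne
      have hσ : τ1⁻¹ * τ2 ∉ A1 := fun hmem => hne (QuotientGroup.eq.mpr hmem)
      refine h (τ1⁻¹ * τ2) hσ (τ1⁻¹ * a * τ1) ((hconj τ1 a).trans ha)
        ⟨(fix_iff a τ1).mp hs, ?_⟩
      have e : (τ1⁻¹ * τ2)⁻¹ * (τ1⁻¹ * a * τ1) * (τ1⁻¹ * τ2) = τ2⁻¹ * a * τ2 := by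
        group
      rw [e]
      exact (fix_iff a τ2).mp ht
    · rintro h σ hσ a ha ⟨h1, h2⟩
      have hs : a • (((1 : A) : A ⧸ A1)) = ((1 : A) : A ⧸ A1) :=
        (fix_iff a 1).mpr (by simpa using h1)
      have ht : a • ((σ : A ⧸ A1)) = ↑σ := (fix_iff a σ).mpr h2
      have h1σ := h a ha _ _ hs ht
      have := QuotientGroup.eq.mp h1σ
      exact hσ (by simpa using this)
  tfae_have 1 → 3 := by
    intro h1 a ha
    have hle : ∀ b ∈ Finset.univ.filter (fun a : A => (a : A ⧸ G) = (φ : A ⧸ G)),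
        (Finset.univ.filter (fun s : A ⧸ A1 => b • s = s)).card ≤ 1 := by
      intro b hb
      refine Finset.card_le_one.mpr fun x hx y hy => ?_
      exact hamost.mp h1 b ((memΦ b).mp hb) x y (Finset.mem_filter.mp hx).2
        (Finset.mem_filter.mp hy).2
    exact (filter_card_eq_one _).mp (hbelow hle a ((memΦ a).mpr ha))
  tfae_have 3 → 2 := by
    intro h3
    refine hbiff.mpr fun a ha => ?_
    obtain ⟨s, hs, -⟩ := h3 a ha
    exact (hex a).mpr ⟨s, hs⟩
  tfae_have 2 → 1 := by
    intro h2
    refine hamost.mpr fun a ha s t hs ht => ?_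
    have hge : ∀ b ∈ Finset.univ.filter (fun a : A => (a : A ⧸ G) = (φ : A ⧸ G)),
        1 ≤ (Finset.univ.filter (fun s : A ⧸ A1 => b • s = s)).card := by
      intro b hb
      obtain ⟨s0, hs0⟩ := (hex b).mp (hbiff.mp h2 b ((memΦ b).mp hb))
      exact Finset.card_pos.mpr ⟨s0, Finset.mem_filter.mpr ⟨Finset.mem_univ _, hs0⟩⟩
    obtain ⟨u, -, huniq⟩ :=
      (filter_card_eq_one _).mp (habove hge a ((memΦ a).mpr ha))
    rw [huniq s hs, huniq t ht]
  tfae_finish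
end

section
/- Let A be a finite group, G ⊴ A, Φ a coset of G generating the cyclic quotient A/G, and A1 ≤ A such that G acts transitively on A/A1. If the sets Φ ∩ σA1σ^{-1} for σ ranging over a set of representatives of A/A1 are pairwise disjoint, then their union equals Φ ∩ A = Φ. (Counting argument: |Φ ∩ σA1σ^{-1}| = |Φ|/[A : A1] for each σ, using transitivity of G on A/A1.) -/
/-- counting argument.
`A` finite, `G ⊴ A` with cyclic quotient generated by the coset `Φ = φG`,
`A1 ≤ A` with `G` transitive on `A/A1`. If the sets `Φ ∩ σA1σ⁻¹` for `σ`
ranging over distinct cosets of `A1` are pairwise disjoint, then their union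
is all of `Φ`. -/
theorem stmt7 {A : Type} [Group A] [Finite A]
    (G : Subgroup A) [G.Normal] [IsCyclic (A ⧸ G)]
    (φ : A) (hφ : ∀ x : A ⧸ G, x ∈ Subgroup.zpowers ((φ : A ⧸ G)))
    (A1 : Subgroup A)
    (htrans : Function.Surjective (fun g : G => ((g : A) : A ⧸ A1)))
    (hdisj : ∀ σ τ : A, ((σ : A ⧸ A1) ≠ (τ : A ⧸ A1)) →
      Disjoint ({a : A | (a : A ⧸ G) = (φ : A ⧸ G)} ∩ {a : A | σ⁻¹ * a * σ ∈ A1})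
        ({a : A | (a : A ⧸ G) = (φ : A ⧸ G)} ∩ {a : A | τ⁻¹ * a * τ ∈ A1})) :
    (⋃ σ : A, {a : A | (a : A ⧸ G) = (φ : A ⧸ G)} ∩ {a : A | σ⁻¹ * a * σ ∈ A1})
      = {a : A | (a : A ⧸ G) = (φ : A ⧸ G)} := by
  classical
  have _inst : Fintype A := Fintype.ofFinite A
  set Φ : Set A := {a : A | (a : A ⧸ G) = (φ : A ⧸ G)} with hΦdef
  set S : A → Set A := fun σ => Φ ∩ {a : A | σ⁻¹ * a * σ ∈ A1} with hSdef
  -- the quotient A ⧸ G is commutative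
  have hcomm : ∀ x y : A ⧸ G, x * y = y * x := by
    intro x y
    obtain ⟨m, hm⟩ := Subgroup.mem_zpowers_iff.mp (hφ x)
    obtain ⟨n, hn⟩ := Subgroup.mem_zpowers_iff.mp (hφ y)
    rw [← hm, ← hn, ← zpow_add, ← zpow_add, add_comm]
  have hconj : ∀ (σ a : A), ((σ⁻¹ * a * σ : A) : A ⧸ G) = (a : A ⧸ G) := by
    intro σ a
    have : ((σ⁻¹ * a * σ : A) : A ⧸ G) = (σ : A ⧸ G)⁻¹ * (a : A ⧸ G) * (σ : A ⧸ G) := by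
      simp [QuotientGroup.mk_mul, QuotientGroup.mk_inv, mul_assoc]
    rw [this, hcomm ((σ : A ⧸ G))⁻¹ (a : A ⧸ G), mul_assoc, inv_mul_cancel, mul_one]
  -- the restriction of the quotient map to A1 is surjective
  let f : A1 →* A ⧸ G := (QuotientGroup.mk' G).comp A1.subtype
  have hf : Function.Surjective f := by
    intro x
    obtain ⟨a, rfl⟩ := QuotientGroup.mk_surjective x
    obtain ⟨g, hg⟩ := htrans ((a : A ⧸ A1))
    have hg' : ((g : A) : A ⧸ A1) = (a : A ⧸ A1) := hg
    have hmem : (g : A)⁻¹ * a ∈ A1 := QuotientGroup.eq.mp hg'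
    refine ⟨⟨(g : A)⁻¹ * a, hmem⟩, ?_⟩
    show QuotientGroup.mk ((g : A)⁻¹ * a) = QuotientGroup.mk a
    rw [QuotientGroup.eq]
    have : ((g : A)⁻¹ * a)⁻¹ * a = a⁻¹ * (g : A) * (a⁻¹)⁻¹ := by group
    rw [this]
    exact Subgroup.Normal.conj_mem ‹G.Normal› _ g.2 a⁻¹
  obtain ⟨b0, hb0⟩ := hf ((φ : A ⧸ G))
  have hb0' : ((b0 : A) : A ⧸ G) = (φ : A ⧸ G) := hb0
  set K : Set A := {a : A | a ∈ A1 ∧ a ∈ G} with hKdef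
  -- each S σ is a bijective image of K
  have hSK : ∀ σ : A, S σ = (fun k => σ * ((b0 : A) * k) * σ⁻¹) '' K := by
    intro σ
    ext a
    constructor
    · rintro ⟨ha1, ha2⟩
      refine ⟨(b0 : A)⁻¹ * (σ⁻¹ * a * σ), ⟨A1.mul_mem (A1.inv_mem b0.2) ha2, ?_⟩, by group⟩
      have : (((b0 : A)⁻¹ * (σ⁻¹ * a * σ) : A) : A ⧸ G) = 1 := by
        rw [QuotientGroup.mk_mul, hconj σ a, ha1, QuotientGroup.mk_inv, hb0',
          inv_mul_cancel]
      rwa [QuotientGroup.eq_one_iff] at this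
    · rintro ⟨k, ⟨hk1, hk2⟩, rfl⟩
      constructor
      · show ((σ * ((b0 : A) * k) * σ⁻¹ : A) : A ⧸ G) = (φ : A ⧸ G)
        have h1 : σ * ((b0 : A) * k) * σ⁻¹ = (σ⁻¹)⁻¹ * ((b0 : A) * k) * σ⁻¹ := by group
        rw [h1, hconj σ⁻¹ ((b0 : A) * k), QuotientGroup.mk_mul, hb0',
          (QuotientGroup.eq_one_iff k).mpr hk2, mul_one]
      · show σ⁻¹ * (σ * ((b0 : A) * k) * σ⁻¹) * σ ∈ A1
        have h1 : σ⁻¹ * (σ * ((b0 : A) * k) * σ⁻¹) * σ = (b0 : A) * k := by group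
        rw [h1]; exact A1.mul_mem b0.2 hk1
  have hinj : ∀ σ : A, Function.Injective (fun k : A => σ * ((b0 : A) * k) * σ⁻¹) := by
    intro σ x y h
    simp only at h
    exact mul_left_cancel (mul_left_cancel (mul_right_cancel h))
  have hScard : ∀ σ : A, (S σ).ncard = K.ncard := by
    intro σ; rw [hSK σ, Set.ncard_image_of_injective _ (hinj σ)]
  -- Φ is a bijective image of G
  have hΦG : Φ = (fun k => φ * k) '' (G : Set A) := by
    ext a
    constructor
    · intro ha
      refine ⟨φ⁻¹ * a, ?_, by group⟩
      have : ((φ⁻¹ * a : A) : A ⧸ G) = 1 := by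
        rw [QuotientGroup.mk_mul, QuotientGroup.mk_inv, ha, inv_mul_cancel]
      rwa [QuotientGroup.eq_one_iff] at this
    · rintro ⟨k, hk, rfl⟩
      show ((φ * k : A) : A ⧸ G) = (φ : A ⧸ G)
      rw [QuotientGroup.mk_mul, (QuotientGroup.eq_one_iff k).mpr hk, mul_one]
  have hΦcard : Φ.ncard = Nat.card G := by
    rw [hΦG, Set.ncard_image_of_injective _ (mul_right_injective φ),
      ← Nat.card_coe_set_eq, Nat.card_eq_fintype_card, ← Nat.card_eq_fintype_card]
    rfl
  -- cardinality of K equals that of the kernel of f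
  have hKker : Nat.card f.ker = K.ncard := by
    have e : f.ker ≃ K := by
      refine ⟨fun x => ⟨(x : A1), (x : A1).2, ?_⟩, fun y => ⟨⟨y.1, y.2.1⟩, ?_⟩, ?_, ?_⟩
      · have := x.2
        simp only [MonoidHom.mem_ker] at this
        exact (QuotientGroup.eq_one_iff _).mp this
      · simp only [MonoidHom.mem_ker]
        exact (QuotientGroup.eq_one_iff _).mpr y.2.2
      · intro x; rfl
      · intro y; rfl
    rw [Nat.card_congr e, Nat.card_coe_set_eq]
  -- counting identities
  have hA1card : Nat.card A1 = Nat.card (A ⧸ G) * K.ncard := by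
    rw [Subgroup.card_eq_card_quotient_mul_card_subgroup f.ker, hKker,
      Nat.card_congr (QuotientGroup.quotientKerEquivOfSurjective f hf).toEquiv]
  have hAcard1 : Nat.card A = Nat.card (A ⧸ A1) * Nat.card A1 :=
    Subgroup.card_eq_card_quotient_mul_card_subgroup A1
  have hAcard2 : Nat.card A = Nat.card (A ⧸ G) * Nat.card G :=
    Subgroup.card_eq_card_quotient_mul_card_subgroup G
  have hGpos : 0 < Nat.card (A ⧸ G) := Nat.card_pos
  have hkey : Nat.card (A ⧸ A1) * K.ncard = Nat.card G := by
    have h1 : (Nat.card (A ⧸ A1) * K.ncard) * Nat.card (A ⧸ G)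
        = (Nat.card G) * Nat.card (A ⧸ G) := by
      calc (Nat.card (A ⧸ A1) * K.ncard) * Nat.card (A ⧸ G)
          = Nat.card (A ⧸ A1) * (Nat.card (A ⧸ G) * K.ncard) := by ring
        _ = Nat.card (A ⧸ A1) * Nat.card A1 := by rw [hA1card]
        _ = Nat.card A := hAcard1.symm
        _ = Nat.card (A ⧸ G) * Nat.card G := hAcard2
        _ = (Nat.card G) * Nat.card (A ⧸ G) := by ring
    exact Nat.eq_of_mul_eq_mul_right hGpos h1
  -- the finset union over coset representatives
  have _inst2 : Fintype (A ⧸ A1) := Fintype.ofFinite _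
  set W : Finset A :=
    Finset.univ.biUnion (fun x : A ⧸ A1 => (S (Quotient.out x)).toFinset) with hWdef
  have hWcard : W.card = Φ.toFinset.card := by
    rw [hWdef, Finset.card_biUnion]
    · have : ∀ x : A ⧸ A1, (S (Quotient.out x)).toFinset.card = K.ncard := by
        intro x
        rw [← Set.ncard_eq_toFinset_card', hScard]
      rw [Finset.sum_congr rfl (fun x _ => this x), Finset.sum_const, smul_eq_mul,
        ← Set.ncard_eq_toFinset_card', hΦcard, ← hkey, Nat.card_eq_fintype_card,
        Finset.card_univ]
    · intro x _ y _ hxy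
      have hne : ((Quotient.out x : A) : A ⧸ A1) ≠ ((Quotient.out y : A) : A ⧸ A1) := by
        rw [QuotientGroup.out_eq', QuotientGroup.out_eq']
        exact hxy
      have := hdisj _ _ hne
      rw [Function.onFun, Finset.disjoint_left]
      intro a haW haW'
      exact Set.disjoint_left.mp this (Set.mem_toFinset.mp haW) (Set.mem_toFinset.mp haW')
  have hWsub : W ⊆ Φ.toFinset := by
    intro a ha
    rw [hWdef, Finset.mem_biUnion] at ha
    obtain ⟨x, _, hax⟩ := ha
    exact Set.mem_toFinset.mpr (Set.mem_toFinset.mp hax).1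
  have hWeq : W = Φ.toFinset := Finset.eq_of_subset_of_card_le hWsub (le_of_eq hWcard.symm)
  -- conclude
  apply Set.Subset.antisymm
  · exact Set.iUnion_subset fun σ => Set.inter_subset_left
  · intro a ha
    have : a ∈ W := hWeq ▸ Set.mem_toFinset.mpr ha
    rw [hWdef, Finset.mem_biUnion] at this
    obtain ⟨x, _, hax⟩ := this
    exact Set.mem_iUnion.mpr ⟨Quotient.out x, Set.mem_toFinset.mp hax⟩
end

section
/- If L/K is an exceptional extension of local fields, then the only K-algebra automorphism of L is the identity, i.e., Aut_K(L) = {id_L}. -/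
open Multiplicative

/-- The intermediate field `E` of `N/K` is totally ramified over `K`:
the residue field of `E` coincides with that of `K` (for finite extensions of
complete discretely valued fields this is equivalent to `e = [E : K]`). -/
def TotRamOver (K : Type) {N : Type} [Field K] [Field N] [Algebra K N]
    [Valued K (WithZero (Multiplicative ℤ))] [Valued N (WithZero (Multiplicative ℤ))] (E : IntermediateField K N) : Prop :=
  ∀ x ∈ E, Valued.v x ≤ (1 : WithZero (Multiplicative ℤ)) →
    ∃ y : K, Valued.v y ≤ (1 : WithZero (Multiplicative ℤ)) ∧ Valued.v (x - algebraMap K N y) < 1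

/-- `L/K` is an exceptional extension of local fields (with Galois closure
`N`): `L/K` is totally ramified, and for every `K`-embedding `σ : L → N`
other than the inclusion, the compositum `L·σ(L)` is not totally ramified
over `K`. -/
def IsExceptional (K L N : Type) [Field K] [Field L] [Field N]
    [Algebra K L] [Algebra K N] [Algebra L N] [IsScalarTower K L N]
    [Valued K (WithZero (Multiplicative ℤ))] [Valued N (WithZero (Multiplicative ℤ))] : Prop :=
  TotRamOver K (IsScalarTower.toAlgHom K L N).fieldRange ∧
  ∀ σ : L →ₐ[K] N, σ ≠ IsScalarTower.toAlgHom K L N →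
    ¬ TotRamOver K ((IsScalarTower.toAlgHom K L N).fieldRange ⊔ σ.fieldRange)

/-- if L/K is an exceptional extension of local fields,
then the only K-algebra automorphism of L is the identity. -/
theorem stmt14 {K L N : Type} [Field K] [Field L] [Field N]
    [Algebra K L] [Algebra K N] [Algebra L N] [IsScalarTower K L N]
    [Valued K (WithZero (Multiplicative ℤ))] [CompleteSpace K] [Valued N (WithZero (Multiplicative ℤ))]
    (hdiscK : ∃ π : K, Valued.v π = (ofAdd (-1 : ℤ) : Multiplicative ℤ))
    [Finite (IsLocalRing.ResidueField
      ((Valued.v : Valuation K (WithZero (Multiplicative ℤ))).valuationSubring))]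
    (hcompat : Valuation.IsEquiv
      ((Valued.v : Valuation N (WithZero (Multiplicative ℤ))).comap (algebraMap K N))
      (Valued.v : Valuation K (WithZero (Multiplicative ℤ))))
    [FiniteDimensional K L] [Algebra.IsSeparable K L]
    [IsGalois K N] (hclosure : IntermediateField.normalClosure K L N = ⊤)
    (hexc : IsExceptional K L N) :
    ∀ f : L ≃ₐ[K] L, f = AlgEquiv.refl := by
  intro f
  by_contra hf
  set ι := IsScalarTower.toAlgHom K L N with hι
  have hσne : ι.comp f.toAlgHom ≠ ι := by
    intro h
    apply hf
    ext x
    have := AlgHom.congr_fun h x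
    have h2 : f x = x := ι.injective this
    simpa using h2
  have hrange : (ι.comp f.toAlgHom).fieldRange = ι.fieldRange := by
    ext x
    constructor
    · rintro ⟨y, rfl⟩; exact ⟨f y, rfl⟩
    · rintro ⟨y, rfl⟩; exact ⟨f.symm y, by simp⟩
  have := hexc.2 (ι.comp f.toAlgHom) hσne
  rw [hrange, sup_idem] at this
  exact this hexc.1
end

section
/- Let A be a finite group, G ⊴ A with A/G cyclic, A1 ≤ A, G1 = G ∩ A1, and suppose G acts transitively on S = A/A1. Fix a coset Φ of G generating A/G. Then the following are equivalent: (i) every σ ∈ A with ⟨G, σ⟩ = A has exactly one fixed point on S; (ii) every σ ∈ Φ has exactly one fixed point on S; (iii) every σ ∈ A1 with ⟨G1, σ⟩ = A1 has exactly one fixed point on S; (iv) every σ ∈ Φ ∩ A1 has at most one fixed point on S. (Here the natural map A1/G1 → A/G is an isomorphism since G is transitive on S, so Φ ∩ A1 generates A1/G1.) -/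
open Finset MulAction

section Stmt19Aux
set_option linter.unusedSectionVars false

variable {A : Type} [Group A] (G : Subgroup A) [G.Normal] (A1 : Subgroup A) (φ : A)

/-- Transitivity of `G` on `A ⧸ A1`, upgraded from surjectivity onto the orbit of the
base point. -/
theorem stmt19_trans (htrans : Function.Surjective (fun g : G => ((g : A) : A ⧸ A1)))
    (s t : A ⧸ A1) : ∃ g : A, g ∈ G ∧ g • s = t := by
  obtain ⟨x, rfl⟩ := QuotientGroup.mk_surjective s
  obtain ⟨y, rfl⟩ := QuotientGroup.mk_surjective t
  obtain ⟨g2, hg2⟩ := htrans ((x⁻¹ * y : A) : A ⧸ A1)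
  have h : (g2 : A)⁻¹ * (x⁻¹ * y) ∈ A1 := QuotientGroup.eq.mp hg2
  refine ⟨x * g2 * x⁻¹, Subgroup.Normal.conj_mem ‹G.Normal› _ g2.2 x, ?_⟩
  have e0 : (x * (g2 : A) * x⁻¹) • (QuotientGroup.mk x : A ⧸ A1)
      = QuotientGroup.mk ((x * (g2 : A) * x⁻¹) * x) := rfl
  rw [e0]
  refine (QuotientGroup.eq).mpr ?_
  have e : (x * (g2 : A) * x⁻¹ * x)⁻¹ * y = (g2 : A)⁻¹ * (x⁻¹ * y) := by group
  rw [e]; exact h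

theorem stmt19_pretrans (htrans : Function.Surjective (fun g : G => ((g : A) : A ⧸ A1))) :
    IsPretransitive G (A ⧸ A1) := by
  constructor
  intro s t
  obtain ⟨g, hg, h⟩ := stmt19_trans G A1 htrans s t
  exact ⟨⟨g, hg⟩, h⟩

/-- Statement (iv) extends from `Φ ∩ A1` to all of the coset `Φ = φG`: any `τ ≡ φ (mod G)`
has at most one fixed point on `A ⧸ A1` (conjugate `τ` into `A1` using a fixed point). -/
theorem stmt19_atmost [IsCyclic (A ⧸ G)]
    (h4 : ∀ σ : A, ((σ : A ⧸ G) = (φ : A ⧸ G)) → σ ∈ A1 →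
        ∀ s t : A ⧸ A1, σ • s = s → σ • t = t → s = t)
    (τ : A) (hτ : ((τ : A ⧸ G) = (φ : A ⧸ G)))
    (s t : A ⧸ A1) (hs : τ • s = s) (ht : τ • t = t) : s = t := by
  have hcomm : ∀ a b : A ⧸ G, a * b = b * a := fun a b =>
    (IsCyclic.commGroup (α := A ⧸ G)).mul_comm a b
  obtain ⟨x, hx⟩ := QuotientGroup.mk_surjective s
  have hτ'G : ((x⁻¹ * τ * x : A) : A ⧸ G) = (φ : A ⧸ G) := by
    have e : ((x⁻¹ * τ * x : A) : A ⧸ G)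
        = ((x : A ⧸ G))⁻¹ * (τ : A ⧸ G) * (x : A ⧸ G) := rfl
    rw [e, hcomm _ (x : A ⧸ G), ← mul_assoc]
    simp [hτ]
  have hτ'A1 : x⁻¹ * τ * x ∈ A1 := by
    have h1 : τ • (QuotientGroup.mk x : A ⧸ A1) = QuotientGroup.mk x := by rw [hx]; exact hs
    have h2 : (QuotientGroup.mk (τ * x) : A ⧸ A1) = QuotientGroup.mk x := h1
    have h3 : (τ * x)⁻¹ * x ∈ A1 := QuotientGroup.eq.mp h2
    have e : (τ * x)⁻¹ * x = (x⁻¹ * τ * x)⁻¹ := by group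
    rw [e] at h3
    exact (inv_mem_iff).mp h3
  have key := h4 (x⁻¹ * τ * x) hτ'G hτ'A1 (x⁻¹ • s) (x⁻¹ • t) ?_ ?_
  · exact smul_left_cancel x⁻¹ key
  · have e : x⁻¹ * τ * x * x⁻¹ = x⁻¹ * τ := by group
    rw [smul_smul, e, ← smul_smul, hs]
  · have e : x⁻¹ * τ * x * x⁻¹ = x⁻¹ * τ := by group
    rw [smul_smul, e, ← smul_smul, ht]

/-- The key counting step (implication (iv) ⇒ (ii)): if every element of the coset `Φ = φG`
has at most one fixed point on `A ⧸ A1`, then — since the average number of fixed points over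
the coset is `1` — every element of `Φ` has exactly one fixed point. -/
theorem stmt19_key [Finite A]
    (htrans : Function.Surjective (fun g : G => ((g : A) : A ⧸ A1)))
    (hatmost : ∀ τ : A, ((τ : A ⧸ G) = (φ : A ⧸ G)) →
      ∀ s t : A ⧸ A1, τ • s = s → τ • t = t → s = t) :
    ∀ σ : A, ((σ : A ⧸ G) = (φ : A ⧸ G)) → ∃! s : A ⧸ A1, σ • s = s := by
  classical
  letI : Fintype A := Fintype.ofFinite A
  letI : Fintype (A ⧸ A1) := Fintype.ofFinite _
  letI : Fintype G := Fintype.ofFinite _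
  haveI : IsPretransitive G (A ⧸ A1) := stmt19_pretrans G A1 htrans
  set f : G → ℕ := fun g => (univ.filter fun s : A ⧸ A1 => (φ * (g : A)) • s = s).card with hf
  have hmkφ : ∀ g : G, ((φ * (g : A) : A) : A ⧸ G) = (φ : A ⧸ G) := by
    intro g
    refine (QuotientGroup.eq).mpr ?_
    have e : (φ * (g : A))⁻¹ * φ = (g : A)⁻¹ := by group
    rw [e]; exact inv_mem g.2
  have hle : ∀ g : G, f g ≤ 1 := by
    intro g
    refine Finset.card_le_one.mpr ?_
    intro a ha b hb
    exact hatmost _ (hmkφ g) a b (Finset.mem_filter.mp ha).2 (Finset.mem_filter.mp hb).2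
  have hsum : ∑ g : G, f g = Fintype.card G := by
    have step1 : ∑ g : G, f g
        = ∑ s : A ⧸ A1, (univ.filter fun g : G => (φ * (g : A)) • s = s).card := by
      simp_rw [hf, Finset.card_filter]
      exact Finset.sum_comm
    have step2 : ∀ s : A ⧸ A1,
        (univ.filter fun g : G => (φ * (g : A)) • s = s).card
          = (univ.filter fun g : G => (g : A) • s = s).card := by
      intro s
      obtain ⟨g0, hg0G, hg0⟩ := stmt19_trans G A1 htrans s (φ⁻¹ • s)
      have hfix : (φ * g0) • s = s := by
        rw [mul_smul, hg0, smul_inv_smul]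
      refine Finset.card_bij' (fun g _ => (⟨g0, hg0G⟩ : G)⁻¹ * g)
        (fun g _ => (⟨g0, hg0G⟩ : G) * g) ?_ ?_ ?_ ?_
      · intro a ha
        rw [Finset.mem_filter] at ha ⊢
        refine ⟨Finset.mem_univ _, ?_⟩
        have e : ((((⟨g0, hg0G⟩ : G))⁻¹ * a : G) : A) = (φ * g0)⁻¹ * (φ * (a : A)) := by
          push_cast; group
        rw [e, mul_smul, ha.2]
        exact inv_smul_eq_iff.mpr hfix.symm
      · intro a ha
        rw [Finset.mem_filter] at ha ⊢
        refine ⟨Finset.mem_univ _, ?_⟩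
        have e : (φ * (((⟨g0, hg0G⟩ : G) * a : G) : A)) = (φ * g0) * ((a : G) : A) := by
          push_cast; group
        rw [e, mul_smul, ha.2, hfix]
      · intro a _
        simp
      · intro a _
        simp
    have step3 : ∑ s : A ⧸ A1, (univ.filter fun g : G => (g : A) • s = s).card
        = ∑ g : G, (univ.filter fun s : A ⧸ A1 => (g : A) • s = s).card := by
      simp_rw [Finset.card_filter]
      exact Finset.sum_comm
    have step4 : ∀ g : G, (univ.filter fun s : A ⧸ A1 => (g : A) • s = s).card
        = Fintype.card (fixedBy (A ⧸ A1) g) := by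
      intro g
      rw [Fintype.card_subtype]
      congr 1
    have step5 : (∑ g : G, Fintype.card (fixedBy (A ⧸ A1) g)) = Fintype.card G := by
      rw [MulAction.sum_card_fixedBy_eq_card_orbits_mul_card_group]
      have hone : Fintype.card (orbitRel.Quotient G (A ⧸ A1)) = 1 := by
        haveI := (MulAction.pretransitive_iff_subsingleton_quotient G (A ⧸ A1)).mp inferInstance
        haveI : Nonempty (orbitRel.Quotient G (A ⧸ A1)) :=
          ⟨Quotient.mk _ ((1 : A) : A ⧸ A1)⟩
        exact Fintype.card_eq_one_iff.mpr ⟨Classical.arbitrary _, fun y => Subsingleton.elim _ _⟩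
      rw [hone, one_mul]
    calc ∑ g : G, f g = _ := step1
      _ = _ := Finset.sum_congr rfl fun s _ => step2 s
      _ = _ := step3
      _ = _ := Finset.sum_congr rfl fun g _ => step4 g
      _ = Fintype.card G := step5
  have hall : ∀ g : G, f g = 1 := by
    have h1 : ∑ g : G, f g = ∑ _g : G, 1 := by
      rw [hsum]; simp
    have h2 := (Finset.sum_eq_sum_iff_of_le (fun i _ => hle i)).mp h1
    intro g; exact h2 g (Finset.mem_univ g)
  intro σ hσ
  have hgmem : φ⁻¹ * σ ∈ G := QuotientGroup.eq.mp hσ.symm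
  have h1 : f ⟨φ⁻¹ * σ, hgmem⟩ = 1 := hall _
  obtain ⟨a, haeq⟩ := Finset.card_eq_one.mp h1
  have hmem : a ∈ univ.filter fun s : A ⧸ A1 =>
      (φ * ((⟨φ⁻¹ * σ, hgmem⟩ : G) : A)) • s = s := by
    rw [haeq]; exact Finset.mem_singleton_self a
  have hφσ : φ * ((⟨φ⁻¹ * σ, hgmem⟩ : G) : A) = σ := by
    show φ * (φ⁻¹ * σ) = σ; group
  refine ⟨a, ?_, ?_⟩
  · have := (Finset.mem_filter.mp hmem).2
    rwa [hφσ] at this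
  · intro t ht
    have hmt : t ∈ univ.filter fun s : A ⧸ A1 =>
        (φ * ((⟨φ⁻¹ * σ, hgmem⟩ : G) : A)) • s = s :=
      Finset.mem_filter.mpr ⟨Finset.mem_univ _, by rwa [hφσ]⟩
    rw [haeq] at hmt
    exact Finset.mem_singleton.mp hmt

end Stmt19Aux

/-- fixed-point characterizations, Theorem `nt-ram` group part.
`A` finite, `G ⊴ A` with cyclic quotient, `A1 ≤ A`, `G1 = G ∩ A1`, `G`
transitive on `S = A/A1`, and `Φ = φG` a coset generating `A/G`. TFAE:
(i) every `σ ∈ A` with `⟨G, σ⟩ = A` has exactly one fixed point on `S`;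
(ii) every `σ ∈ Φ` has exactly one fixed point on `S`;
(iii) every `σ ∈ A1` with `⟨G1, σ⟩ = A1` has exactly one fixed point on `S`;
(iv) every `σ ∈ Φ ∩ A1` has at most one fixed point on `S`. -/
theorem stmt19 {A : Type} [Group A] [Finite A]
    (G : Subgroup A) [G.Normal] [IsCyclic (A ⧸ G)]
    (A1 : Subgroup A)
    (htrans : Function.Surjective (fun g : G => ((g : A) : A ⧸ A1)))
    (φ : A) (hφ : ∀ x : A ⧸ G, x ∈ Subgroup.zpowers ((φ : A ⧸ G))) :
    [ (∀ σ : A, G ⊔ Subgroup.zpowers σ = ⊤ → ∃! s : A ⧸ A1, σ • s = s),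
      (∀ σ : A, ((σ : A ⧸ G) = (φ : A ⧸ G)) → ∃! s : A ⧸ A1, σ • s = s),
      (∀ σ : A1, (G.subgroupOf A1) ⊔ Subgroup.zpowers σ = ⊤ →
        ∃! s : A ⧸ A1, (σ : A) • s = s),
      (∀ σ : A, ((σ : A ⧸ G) = (φ : A ⧸ G)) → σ ∈ A1 →
        ∀ s t : A ⧸ A1, σ • s = s → σ • t = t → s = t) ].TFAE := by
  tfae_have 1 → 3 := by
    intro h1 σ hσ
    have hmapA1 : Subgroup.map A1.subtype ⊤ = A1 := by
      rw [← MonoidHom.range_eq_map, Subgroup.range_subtype]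
    have hmapsup : Subgroup.map A1.subtype (G.subgroupOf A1 ⊔ Subgroup.zpowers σ)
        = (G ⊓ A1) ⊔ Subgroup.zpowers (σ : A) := by
      rw [Subgroup.map_sup, Subgroup.subgroupOf_map_subtype, MonoidHom.map_zpowers]
      rfl
    have hA1le : A1 ≤ G ⊔ Subgroup.zpowers (σ : A) := by
      have h := congrArg (Subgroup.map A1.subtype) hσ
      rw [hmapsup, hmapA1] at h
      exact h.symm.trans_le (sup_le_sup_right inf_le_left _)
    have htop : G ⊔ Subgroup.zpowers (σ : A) = ⊤ := by
      rw [eq_top_iff]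
      intro a _
      obtain ⟨g, hg⟩ := htrans ((a : A) : A ⧸ A1)
      have hmem : (g : A)⁻¹ * a ∈ A1 := QuotientGroup.eq.mp hg
      have e : a = (g : A) * ((g : A)⁻¹ * a) := by group
      rw [e]
      exact mul_mem ((le_sup_left : G ≤ _) g.2) (hA1le hmem)
    exact h1 (σ : A) htop
  tfae_have 3 → 4 := by
    intro h3 σ hσφ hσA1 s t hs ht
    set σ' : A1 := ⟨σ, hσA1⟩ with hσ'
    have htop : G.subgroupOf A1 ⊔ Subgroup.zpowers σ' = ⊤ := by
      rw [eq_top_iff]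
      intro a _
      obtain ⟨k, hk⟩ := Subgroup.mem_zpowers_iff.mp (hφ (((a : A) : A ⧸ G)))
      have hGmem : ((a * σ' ^ (-k) : A1) : A) ∈ G := by
        rw [← QuotientGroup.eq_one_iff]
        have e1 : ((a * σ' ^ (-k) : A1) : A) = (a : A) * σ ^ (-k) := by push_cast; rfl
        have e2 : (((a : A) * σ ^ (-k) : A) : A ⧸ G)
            = (((a : A)) : A ⧸ G) * ((σ : A ⧸ G)) ^ (-k) := by push_cast; rfl
        rw [e1, e2, hσφ, ← hk]
        group
      have e : a = (a * σ' ^ (-k)) * σ' ^ k := by group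
      rw [e]
      exact mul_mem ((le_sup_left : G.subgroupOf A1 ≤ _) (Subgroup.mem_subgroupOf.mpr hGmem))
        ((le_sup_right : Subgroup.zpowers σ' ≤ _) (zpow_mem (Subgroup.mem_zpowers σ') k))
    exact (h3 σ' htop).unique hs ht
  tfae_have 4 → 2 := by
    intro h4 σ hσ
    exact stmt19_key G A1 φ htrans
      (fun τ hτ s t hs ht => stmt19_atmost G A1 φ h4 τ hτ s t hs ht) σ hσ
  tfae_have 2 → 1 := by
    intro h2 σ hσ
    have hφmem : φ ∈ ((G ⊔ Subgroup.zpowers σ : Subgroup A) : Set A) := by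
      rw [hσ]; trivial
    rw [Subgroup.normal_mul] at hφmem
    obtain ⟨g, hg, y, hy, hmul⟩ := hφmem
    obtain ⟨m, hm⟩ := Subgroup.mem_zpowers_iff.mp hy
    rw [← hm] at hmul
    have hτ : ((σ ^ m : A) : A ⧸ G) = (φ : A ⧸ G) := by
      refine (QuotientGroup.eq).mpr ?_
      have e : (σ ^ m)⁻¹ * φ = (σ ^ m)⁻¹ * g * ((σ ^ m)⁻¹)⁻¹ := by rw [← hmul]; group
      rw [e]
      exact Subgroup.Normal.conj_mem ‹G.Normal› g hg _
    obtain ⟨s, hs, huniq⟩ := h2 (σ ^ m) hτ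
    refine ⟨s, ?_, ?_⟩
    · have hc : (σ ^ m) • (σ • s) = σ • s := by
        rw [smul_smul, ((Commute.refl σ).zpow_left m).eq, ← smul_smul, hs]
      exact huniq (σ • s) hc
    · intro t ht
      have hstab : σ ∈ MulAction.stabilizer A t := MulAction.mem_stabilizer_iff.mpr ht
      exact huniq t (MulAction.mem_stabilizer_iff.mp (zpow_mem hstab m))
  tfae_finish
end
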